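/- The 4-dimensional complex Leibniz algebras R₅ ([e₁,e₁]=e₃, [e₁,e₂]=e₄, [e₃,e₁]=e₄) and R₆ ([e₁,e₁]=e₃, [e₂,e₂]=e₄, [e₃,e₁]=e₄) are not isomorphic, since their left annihilators {x : [x,L]=0} have different dimensions. -/
import Mathlib


/-- The bracket of `R₅` as a bilinear map:
`[e₁,e₁]=e₃, [e₁,e₂]=e₄, [e₃,e₁]=e₄`, other products zero. -/
noncomputable def r5 : (Fin 4 → ℂ) →ₗ[ℂ] (Fin 4 → ℂ) →ₗ[ℂ] (Fin 4 → ℂ) :=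
  LinearMap.mk₂ ℂ (fun x y => ![0, 0, x 0 * y 0, x 0 * y 1 + x 2 * y 0])
    (by intro a b c; funext i; fin_cases i <;> simp <;> ring)
    (by intro t a b; funext i; fin_cases i <;> simp <;> ring)
    (by intro a b c; funext i; fin_cases i <;> simp <;> ring)
    (by intro t a b; funext i; fin_cases i <;> simp <;> ring)

/-- The bracket of `R₆` as a bilinear map:
`[e₁,e₁]=e₃, [e₂,e₂]=e₄, [e₃,e₁]=e₄`, other products zero. -/
noncomputable def r6 : (Fin 4 → ℂ) →ₗ[ℂ] (Fin 4 → ℂ) →ₗ[ℂ] (Fin 4 → ℂ) :=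
  LinearMap.mk₂ ℂ (fun x y => ![0, 0, x 0 * y 0, x 1 * y 1 + x 2 * y 0])
    (by intro a b c; funext i; fin_cases i <;> simp <;> ring)
    (by intro t a b; funext i; fin_cases i <;> simp <;> ring)
    (by intro a b c; funext i; fin_cases i <;> simp <;> ring)
    (by intro t a b; funext i; fin_cases i <;> simp <;> ring)

lemma mem_ker5 (x : Fin 4 → ℂ) : x ∈ LinearMap.ker r5 ↔ x 0 = 0 ∧ x 2 = 0 := by
  constructor
  · intro h
    rw [LinearMap.mem_ker] at h
    have h1 := congrFun (congrArg (fun g => g (![1,0,0,0] : Fin 4 → ℂ)) h) 2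
    have h2 := congrFun (congrArg (fun g => g (![1,0,0,0] : Fin 4 → ℂ)) h) 3
    simp [r5] at h1 h2
    exact ⟨h1, h2⟩
  · rintro ⟨h0, h2⟩
    rw [LinearMap.mem_ker]
    ext y i
    fin_cases i <;> simp [r5, h0, h2]

lemma mem_ker6 (x : Fin 4 → ℂ) : x ∈ LinearMap.ker r6 ↔ x 0 = 0 ∧ x 1 = 0 ∧ x 2 = 0 := by
  constructor
  · intro h
    rw [LinearMap.mem_ker] at h
    have h1 := congrFun (congrArg (fun g => g (![1,0,0,0] : Fin 4 → ℂ)) h) 2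
    have h2 := congrFun (congrArg (fun g => g (![1,0,0,0] : Fin 4 → ℂ)) h) 3
    have h3 := congrFun (congrArg (fun g => g (![0,1,0,0] : Fin 4 → ℂ)) h) 3
    simp [r6] at h1 h2 h3
    exact ⟨h1, h3, h2⟩
  · rintro ⟨h0, h1, h2⟩
    rw [LinearMap.mem_ker]
    ext y i
    fin_cases i <;> simp [r6, h0, h1, h2]

lemma ker5_eq : LinearMap.ker r5 =
    Submodule.span ℂ {(![0,1,0,0] : Fin 4 → ℂ), ![0,0,0,1]} := by
  apply le_antisymm
  · intro x hx
    rw [mem_ker5] at hx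
    rw [Submodule.mem_span_pair]
    refine ⟨x 1, x 3, ?_⟩
    ext i
    fin_cases i <;> simp [hx.1, hx.2]
  · rw [Submodule.span_le]
    rintro x (rfl | rfl) <;> rw [SetLike.mem_coe, mem_ker5] <;> simp

lemma ker6_eq : LinearMap.ker r6 =
    Submodule.span ℂ {(![0,0,0,1] : Fin 4 → ℂ)} := by
  apply le_antisymm
  · intro x hx
    rw [mem_ker6] at hx
    rw [Submodule.mem_span_singleton]
    refine ⟨x 3, ?_⟩
    ext i
    fin_cases i <;> simp [hx.1, hx.2.1, hx.2.2]
  · rw [Submodule.span_le]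
    rintro x rfl
    rw [SetLike.mem_coe, mem_ker6]; simp

lemma finrank_ker5 : Module.finrank ℂ (LinearMap.ker r5) = 2 := by
  have hli : LinearIndependent ℂ ![(![0,1,0,0] : Fin 4 → ℂ), ![0,0,0,1]] := by
    rw [Fintype.linearIndependent_iff]
    intro g hg i
    have h1 := congrFun hg 1
    have h3 := congrFun hg 3
    simp [Fin.sum_univ_two] at h1 h3
    fin_cases i <;> simp [h1, h3]
  have hr : ({(![0,1,0,0] : Fin 4 → ℂ), ![0,0,0,1]} : Set (Fin 4 → ℂ)) =
      Set.range ![(![0,1,0,0] : Fin 4 → ℂ), ![0,0,0,1]] := by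
    simp [Matrix.range_cons, Matrix.range_empty, Set.pair_comm]
  rw [ker5_eq, hr, finrank_span_eq_card hli]
  simp

lemma finrank_ker6 : Module.finrank ℂ (LinearMap.ker r6) = 1 := by
  rw [ker6_eq, finrank_span_singleton]
  intro h
  have := congrFun h 3
  simp at this

/-- `R₅` and `R₆` are not isomorphic: their left annihilators
(`ker` of the bracket as a map `L → Hom(L,L)`) have different dimensions. -/
theorem stmt_14 :
    Module.finrank ℂ (LinearMap.ker r5) ≠ Module.finrank ℂ (LinearMap.ker r6) ∧
      ¬ ∃ f : (Fin 4 → ℂ) ≃ₗ[ℂ] (Fin 4 → ℂ),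
          ∀ x y, f (r5 x y) = r6 (f x) (f y) := by

  have hne : Module.finrank ℂ (LinearMap.ker r5) ≠ Module.finrank ℂ (LinearMap.ker r6) := by
    rw [finrank_ker5, finrank_ker6]; norm_num
  refine ⟨hne, ?_⟩
  rintro ⟨f, hf⟩
  apply hne
  have hmap : Submodule.map (f : (Fin 4 → ℂ) →ₗ[ℂ] (Fin 4 → ℂ)) (LinearMap.ker r5)
      = LinearMap.ker r6 := by
    ext z
    rw [Submodule.mem_map_equiv, LinearMap.mem_ker, LinearMap.mem_ker]
    constructor
    · intro h
      refine LinearMap.ext fun w => ?_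
      have hw := hf (f.symm z) (f.symm w)
      rw [f.apply_symm_apply, f.apply_symm_apply, h] at hw
      simpa using hw.symm
    · intro h
      refine LinearMap.ext fun w => ?_
      have hw := hf (f.symm z) w
      rw [f.apply_symm_apply, h] at hw
      simpa using hw
  calc Module.finrank ℂ (LinearMap.ker r5)
      = Module.finrank ℂ (Submodule.map (f : (Fin 4 → ℂ) →ₗ[ℂ] (Fin 4 → ℂ))
          (LinearMap.ker r5)) := (f.submoduleMap (LinearMap.ker r5)).finrank_eq
    _ = Module.finrank ℂ (LinearMap.ker r6) := by rw [hmap]
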